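/- For a positive-definite symmetric matrix A of determinant 1 and X = log A (the symmetric logarithm), the path γ(t) = exp(tX), t ∈ [0,1], satisfies: the Thurston–Finsler length (1/2)∫₀¹ λ_max(γ'(t)γ(t)⁻¹) dt equals (1/2) λ_max(X) = d_Th(I, A), where λ_max denotes the largest eigenvalue. -/

import Mathlib

open Matrix

attribute [local instance] Matrix.frobeniusNormedAddCommGroup Matrix.frobeniusNormedSpace

/-- `d_Th(Y, X) = (1/2) max { log λ : λ eigenvalue of X Y⁻¹ }`. -/
noncomputable def dTh {n : ℕ} (Y X : Matrix (Fin n) (Fin n) ℝ) : ℝ :=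
  (1 / 2) * sSup {r : ℝ | ∃ lam ∈ spectrum ℝ (X * Y⁻¹), r = Real.log lam}

/-!
Along `γ(t) = exp (t X)` the logarithmic derivative `γ'(t) γ(t)⁻¹` is the constant `X`, so the
Finsler length is `λ_max(X) / 2`. Since `X` is symmetric, the functional calculus gives
`spectrum (exp X) = exp '' spectrum X`, whose logarithms are again the eigenvalues of `X`; hence
`d_Th(I, exp X) = λ_max(X) / 2` as well.
-/

open NormedSpace

namespace Matrix

variable {m 𝕜 : Type*} [Fintype m] [DecidableEq m] [RCLike 𝕜]

theorem deriv_exp_smul_mul_inv (X : Matrix m m 𝕜) (t : 𝕜) :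
    deriv (fun s : 𝕜 => exp (s • X)) t * (exp (t • X))⁻¹ = X := by
  have hderiv : deriv (fun s : 𝕜 => exp (s • X)) t = X * exp (t • X) :=
    (@hasDerivAt_exp_smul_const' 𝕜 _ _ frobeniusNormedRing frobeniusNormedAlgebra _ X t).deriv
  have hdet : IsUnit (exp (t • X)).det := (isUnit_iff_isUnit_det _).mp (isUnit_exp _)
  rw [hderiv, Matrix.mul_assoc, mul_nonsing_inv _ hdet, Matrix.mul_one]

theorem IsHermitian.spectrum_exp {X : Matrix m m 𝕜} (hX : X.IsHermitian) :
    spectrum ℝ (NormedSpace.exp X) = Real.exp '' spectrum ℝ X := by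
  -- `frobeniusNormedRing` is not an instance, so the functional calculus is passed by hand
  have hcfc : cfc Real.exp X = NormedSpace.exp X :=
    @CFC.real_exp_eq_normedSpace_exp _ frobeniusNormedRing _ frobeniusNormedAlgebra
      IsHermitian.instContinuousFunctionalCalculus X hX.isSelfAdjoint
  rw [← hcfc, cfc_map_spectrum Real.exp X]

end Matrix

theorem dTh_one_exp {n : ℕ} {X : Matrix (Fin n) (Fin n) ℝ} (hX : X.IsHermitian) :
    dTh 1 (exp X) = (1 / 2) * sSup (spectrum ℝ X) := by
  have hlog : {r : ℝ | ∃ lam ∈ Real.exp '' spectrum ℝ X, r = Real.log lam} = spectrum ℝ X := by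
    ext r
    simp [eq_comm]
  rw [dTh, inv_one, Matrix.mul_one, hX.spectrum_exp, hlog]

theorem finsler_length_of_exp_path_general (n : ℕ) (A X : Matrix (Fin n) (Fin n) ℝ)
    (hX : X.IsSymm) (hexp : NormedSpace.exp X = A) :
    (1 / 2) * (∫ t in (0:ℝ)..1, sSup (spectrum ℝ
        ((deriv (fun s : ℝ => NormedSpace.exp (s • X)) t) * (NormedSpace.exp (t • X))⁻¹)))
      = (1 / 2) * sSup (spectrum ℝ X) ∧
    (1 / 2) * sSup (spectrum ℝ X) = dTh 1 A := by
  refine ⟨?_, ?_⟩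
  · simp [deriv_exp_smul_mul_inv]
  · rw [← hexp, dTh_one_exp (isHermitian_iff_isSymm.mpr hX)]

/-- For a positive-definite symmetric matrix `A` of determinant 1 and `X = log A`
symmetric with `exp X = A`, the path `γ(t) = exp (t X)`, `t ∈ [0,1]`, has
Thurston–Finsler length `(1/2) ∫₀¹ λ_max (γ'(t) γ(t)⁻¹) dt` equal to
`(1/2) λ_max X`, which equals the Thurston distance `d_Th(I, A)`. -/
theorem finsler_length_of_exp_path (n : ℕ) (A X : Matrix (Fin n) (Fin n) ℝ)
    (hA : A.PosDef) (hdA : A.det = 1) (hX : X.IsSymm) (hexp : NormedSpace.exp X = A) :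
    (1 / 2) * (∫ t in (0:ℝ)..1, sSup (spectrum ℝ
        ((deriv (fun s : ℝ => NormedSpace.exp (s • X)) t) * (NormedSpace.exp (t • X))⁻¹)))
      = (1 / 2) * sSup (spectrum ℝ X) ∧
    (1 / 2) * sSup (spectrum ℝ X) = dTh 1 A :=
  finsler_length_of_exp_path_general n A X hX hexp
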